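/- arXiv:1907.00669 — 2 statements merged into one kernel-verified Lean document; each statement's English description precedes it below -/
import Mathlib

section
/- (At most one zero of the first Melnikov function bifurcates from the figure-eight.) There exists δ > 0 such that for all real numbers λ₁, λ₄ with (λ₁, λ₄) ≠ (0, 0), the function h ↦ λ₁·I_0(h) + λ₄·I_2(h) has at most one zero in the interval (0, δ); that is, the set {h ∈ (0, δ) : λ₁·I_0(h) + λ₄·I_2(h) = 0} contains at most one point. -/
open Real Set Filter intervalIntegral

/-- Right endpoint of the exterior oval: `x_max(h) = √(1 + √(1+4h))`. -/
noncomputable def xmax (h : ℝ) : ℝ := Real.sqrt (1 + Real.sqrt (1 + 4*h))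

/-- Complete elliptic integral `I_i(h) = ∫_{-x_max}^{x_max} x^i √(2h + x² - x⁴/2) dx`. -/
noncomputable def ellI (i : ℕ) (h : ℝ) : ℝ :=
  ∫ x in (-xmax h)..(xmax h), x^i * Real.sqrt (2*h + x^2 - x^4/2)

/-- Complete elliptic integral `I'_i(h) = ∫_{-x_max}^{x_max} x^i (2h + x² - x⁴/2)^{-1/2} dx`. -/
noncomputable def ellI' (i : ℕ) (h : ℝ) : ℝ :=
  ∫ x in (-xmax h)..(xmax h), x^i / Real.sqrt (2*h + x^2 - x^4/2)

/-!
Substituting `x = √m · t` with `m = x_max(h)² = 1 + √(1+4h)` turns `I_i(h)` into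
`√m ^ (i+2) · J_i(m)`, where `J_i(m) = ∫_{-1}^{1} t^i √((1-t²)(m(1+t²)/2 - 1)) dt`, so the
zeros of `λ₁ I_0 + λ₄ I_2` on `(0, δ)` correspond to zeros of `λ₁ J_0(m) + λ₄ m J_2(m)` with
`m` just above `2`. As `m → 2⁺` the radicand acquires a double zero at the saddle `t = 0`, so
`J_0'(m)` blows up like `-log(m-2)/16`, while `J_0`, `J_2`, `J_2'` stay bounded and `J_2` stays
positive. Hence the Wronskian of `J_0` and `m J_2` is positive near `m = 2`: the ratio
`J_0 / (m J_2)` is strictly increasing there, and a nontrivial combination has at most one zero.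
-/

open MeasureTheory
open scoped Interval Topology

theorem subsingleton_zeros_of_wronskian_pos {f g f' g' : ℝ → ℝ} {a b : ℝ}
    (hf : ∀ x ∈ Ioo a b, HasDerivAt f (f' x) x) (hg : ∀ x ∈ Ioo a b, HasDerivAt g (g' x) x)
    (hg_pos : ∀ x ∈ Ioo a b, 0 < g x) (hW : ∀ x ∈ Ioo a b, 0 < f' x * g x - f x * g' x)
    {c d : ℝ} (hcd : (c, d) ≠ (0, 0)) :
    {x | x ∈ Ioo a b ∧ c * f x + d * g x = 0}.Subsingleton := by
  have hratio : ∀ x ∈ Ioo a b,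
      HasDerivAt (fun x => f x / g x) ((f' x * g x - f x * g' x) / g x ^ 2) x :=
    fun x hx => (hf x hx).div (hg x hx) (hg_pos x hx).ne'
  have hmono : StrictMonoOn (fun x => f x / g x) (Ioo a b) :=
    strictMonoOn_of_deriv_pos (convex_Ioo a b)
      (fun x hx => (hratio x hx).continuousAt.continuousWithinAt)
      (fun x hx => by
        rw [interior_Ioo] at hx
        rw [(hratio x hx).deriv]
        exact div_pos (hW x hx) (pow_pos (hg_pos x hx) 2))
  rintro x ⟨hx, hx0⟩ y ⟨hy, hy0⟩
  rcases eq_or_ne c 0 with rfl | hc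
  · have hd : d ≠ 0 := fun hd => hcd (by rw [hd])
    simp only [zero_mul, zero_add, mul_eq_zero, hd, false_or] at hx0
    exact absurd hx0 (hg_pos x hx).ne'
  · refine hmono.injOn hx hy ?_
    have key : ∀ z ∈ Ioo a b, c * f z + d * g z = 0 → f z / g z = -d / c := fun z hz hz0 => by
      field_simp [(hg_pos z hz).ne', hc]
      linear_combination hz0
    simp only [key x hx hx0, key y hy hy0]

noncomputable def ovalPoly (m t : ℝ) : ℝ := (1 - t ^ 2) * (m * (1 + t ^ 2) / 2 - 1)

noncomputable def ovalIntegral (i : ℕ) (m : ℝ) : ℝ :=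
  ∫ t in (-1 : ℝ)..1, t ^ i * √(ovalPoly m t)

noncomputable def sqrtOvalPolyDeriv (m t : ℝ) : ℝ :=
  (1 - t ^ 2) * (1 + t ^ 2) / (4 * √(ovalPoly m t))

noncomputable def ovalIntegralDeriv (i : ℕ) (m : ℝ) : ℝ :=
  ∫ t in (-1 : ℝ)..1, t ^ i * sqrtOvalPolyDeriv m t

noncomputable def ovalParam (h : ℝ) : ℝ := 1 + √(1 + 4 * h)

lemma strictMonoOn_ovalParam : StrictMonoOn ovalParam (Ici (-1 / 4)) := fun x hx y _ hxy => by
  unfold ovalParam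
  gcongr
  linarith [mem_Ici.1 hx]

lemma ovalParam_mem_Ioo {h δ : ℝ} (hh : h ∈ Ioo 0 δ) : ovalParam h ∈ Ioo 2 (2 + 2 * δ) := by
  obtain ⟨h0, hδ⟩ := hh
  have hs : 1 < √(1 + 4 * h) := by rw [Real.lt_sqrt zero_le_one]; linarith
  have hs' : √(1 + 4 * h) ≤ 1 + 2 * h := Real.sqrt_le_iff.2 ⟨by linarith, by nlinarith⟩
  constructor <;> unfold ovalParam <;> linarith

lemma ellI_eq_ovalIntegral (i : ℕ) {h : ℝ} (hh : 0 ≤ h) :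
    ellI i h = √(ovalParam h) ^ (i + 2) * ovalIntegral i (ovalParam h) := by
  set m := ovalParam h
  have hm : 0 ≤ m := by unfold m ovalParam; positivity
  have hsm : 0 < √m := Real.sqrt_pos.2 (by unfold m ovalParam; positivity)
  have h2h : 2 * h = m ^ 2 / 2 - m := by
    unfold m ovalParam; nlinarith [Real.sq_sqrt (by linarith : (0 : ℝ) ≤ 1 + 4 * h)]
  have hrad : ∀ t, 2 * h + (√m * t) ^ 2 - (√m * t) ^ 4 / 2 = m * ovalPoly m t := fun t => by
    have h4 : √m ^ 4 = m ^ 2 := by rw [show 4 = 2 * 2 from rfl, pow_mul, Real.sq_sqrt hm]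
    rw [mul_pow, mul_pow, Real.sq_sqrt hm, h4, h2h, ovalPoly]; ring
  have hsub := intervalIntegral.smul_integral_comp_mul_left
    (fun x => x ^ i * √(2 * h + x ^ 2 - x ^ 4 / 2)) √m (a := -1) (b := 1)
  rw [mul_neg_one, mul_one] at hsub
  rw [ellI, show xmax h = √m from rfl, ← hsub, smul_eq_mul, ovalIntegral,
    ← intervalIntegral.integral_const_mul, ← intervalIntegral.integral_const_mul]
  refine intervalIntegral.integral_congr fun t _ => ?_
  simp only [hrad, Real.sqrt_mul hm]
  ring

lemma ovalParam_mem_zeros {h δ l1 l4 : ℝ} (hh : h ∈ Ioo 0 δ)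
    (hzero : l1 * ellI 0 h + l4 * ellI 2 h = 0) :
    ovalParam h ∈ {m | m ∈ Ioo 2 (2 + 2 * δ) ∧
      l1 * ovalIntegral 0 m + l4 * (m * ovalIntegral 2 m) = 0} := by
  have hm := ovalParam_mem_Ioo hh
  have h4 : √(ovalParam h) ^ 4 = ovalParam h ^ 2 := by
    rw [show 4 = 2 * 2 from rfl, pow_mul, Real.sq_sqrt (by linarith [hm.1])]
  rw [ellI_eq_ovalIntegral 0 hh.1.le, ellI_eq_ovalIntegral 2 hh.1.le, zero_add,
    Real.sq_sqrt (by linarith [hm.1]), h4] at hzero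
  refine ⟨hm, (mul_eq_zero.1 (?_ : ovalParam h * _ = 0)).resolve_left (by linarith [hm.1])⟩
  linear_combination hzero

lemma mul_le_ovalPoly {m t c : ℝ} (ht : t ^ 2 ≤ 1) (hc : c ≤ m * (1 + t ^ 2) / 2 - 1) :
    (1 - t ^ 2) * c ≤ ovalPoly m t :=
  mul_le_mul_of_nonneg_left hc (by linarith)

lemma sqrtOvalPolyDeriv_nonneg (m : ℝ) {t : ℝ} (ht : t ^ 2 ≤ 1) :
    0 ≤ sqrtOvalPolyDeriv m t := by
  have : 0 ≤ 1 - t ^ 2 := by linarith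
  unfold sqrtOvalPolyDeriv
  positivity

lemma sqrtOvalPolyDeriv_le {m t c : ℝ} (hc : 0 < c) (ht : t ^ 2 ≤ 1)
    (hcm : c ≤ m * (1 + t ^ 2) / 2 - 1) : sqrtOvalPolyDeriv m t ≤ 1 / (2 * √c) := by
  have hu : 0 ≤ 1 - t ^ 2 := by linarith
  have hroot : √(1 - t ^ 2) * √c ≤ √(ovalPoly m t) := by
    rw [← Real.sqrt_mul hu]; exact Real.sqrt_le_sqrt (mul_le_ovalPoly ht hcm)
  rcases hu.eq_or_lt with hu0 | hu0
  · simp [sqrtOvalPolyDeriv, ← hu0]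
  have hs : 0 < √(1 - t ^ 2) := Real.sqrt_pos.2 hu0
  have hsc : 0 < √c := Real.sqrt_pos.2 hc
  calc sqrtOvalPolyDeriv m t ≤ (1 - t ^ 2) * (1 + t ^ 2) / (4 * (√(1 - t ^ 2) * √c)) := by
        unfold sqrtOvalPolyDeriv; gcongr
    _ = √(1 - t ^ 2) * (1 + t ^ 2) / (4 * √c) := by
        rw [div_eq_div_iff (by positivity) (by positivity)]
        linear_combination (4 * (1 + t ^ 2) * √c) * (Real.sq_sqrt hu).symm
    _ ≤ 1 * 2 / (4 * √c) := by
        gcongr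
        · exact Real.sqrt_le_one.2 (sub_le_self 1 (sq_nonneg t))
        · linarith
    _ = 1 / (2 * √c) := by ring

lemma hasDerivAt_sqrt_ovalPoly {m t : ℝ} (hm : 2 < m) (ht : t ^ 2 < 1) :
    HasDerivAt (fun m => √(ovalPoly m t)) (sqrtOvalPolyDeriv m t) m := by
  have hpos : 0 < ovalPoly m t :=
    (mul_pos (by linarith) (by linarith : (0:ℝ) < m / 2 - 1)).trans_le
      (mul_le_ovalPoly ht.le (by nlinarith))
  have hlin : HasDerivAt (fun m => ovalPoly m t) ((1 - t ^ 2) * (1 + t ^ 2) / 2) m := by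
    unfold ovalPoly
    exact (((((hasDerivAt_id' m).mul_const (1 + t ^ 2)).div_const 2).sub_const 1).const_mul
      (1 - t ^ 2)).congr_deriv (by ring)
  convert hlin.sqrt hpos.ne' using 1
  unfold sqrtOvalPolyDeriv; field_simp; ring

lemma norm_pow_mul_sqrtOvalPolyDeriv_le (i : ℕ) {m t c : ℝ} (hc : 0 < c) (hcm : c ≤ m / 2 - 1)
    (ht : t ^ 2 ≤ 1) : ‖t ^ i * sqrtOvalPolyDeriv m t‖ ≤ 1 / (2 * √c) := by
  have hti : |t ^ i| ≤ 1 := by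
    rw [abs_pow]; exact pow_le_one₀ (abs_nonneg t) ((sq_le_one_iff_abs_le_one t).1 ht)
  rw [Real.norm_eq_abs, abs_mul, abs_of_nonneg (sqrtOvalPolyDeriv_nonneg m ht)]
  calc |t ^ i| * sqrtOvalPolyDeriv m t ≤ 1 * (1 / (2 * √c)) :=
        mul_le_mul hti (sqrtOvalPolyDeriv_le hc ht (by nlinarith)) (sqrtOvalPolyDeriv_nonneg m ht)
          zero_le_one
    _ = 1 / (2 * √c) := one_mul _

lemma sq_le_one_of_mem_uIoc {t : ℝ} (ht : t ∈ Ι (-1 : ℝ) 1) : t ^ 2 ≤ 1 := by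
  rw [uIoc_of_le (by norm_num)] at ht
  nlinarith [ht.1, ht.2]

lemma measurable_sqrtOvalPolyDeriv (m : ℝ) : Measurable (sqrtOvalPolyDeriv m) := by
  unfold sqrtOvalPolyDeriv ovalPoly; fun_prop

lemma intervalIntegrable_pow_mul_sqrtOvalPolyDeriv (i : ℕ) {m : ℝ} (hm : 2 < m) :
    IntervalIntegrable (fun t => t ^ i * sqrtOvalPolyDeriv m t) volume (-1) 1 :=
  (intervalIntegrable_const (c := 1 / (2 * √(m / 2 - 1)))).mono_fun'
    ((measurable_id.pow_const i).mul (measurable_sqrtOvalPolyDeriv m)).aestronglyMeasurable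
    ((ae_restrict_mem measurableSet_uIoc).mono fun t ht =>
      norm_pow_mul_sqrtOvalPolyDeriv_le i (by linarith) le_rfl (sq_le_one_of_mem_uIoc ht))

theorem hasDerivAt_ovalIntegral (i : ℕ) {m : ℝ} (hm : 2 < m) :
    HasDerivAt (ovalIntegral i) (ovalIntegralDeriv i m) m := by
  have hball : Metric.ball m ((m - 2) / 2) ∈ 𝓝 m := Metric.ball_mem_nhds m (by linarith)
  have hnear : ∀ m' ∈ Metric.ball m ((m - 2) / 2), (m - 2) / 4 ≤ m' / 2 - 1 ∧ 2 < m' := by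
    intro m' hm'
    rw [Metric.mem_ball, Real.dist_eq, abs_lt] at hm'
    constructor <;> linarith [hm'.1]
  refine (hasDerivAt_integral_of_dominated_loc_of_deriv_le (μ := volume)
    (F := fun m t => t ^ i * √(ovalPoly m t)) (F' := fun m t => t ^ i * sqrtOvalPolyDeriv m t)
    (bound := fun _ => 1 / (2 * √((m - 2) / 4))) hball ?_ ?_ ?_ ?_ intervalIntegrable_const ?_).2
  · exact Eventually.of_forall fun m' => by unfold ovalPoly; fun_prop
  · exact (by unfold ovalPoly; fun_prop : Continuous _).intervalIntegrable _ _
  · exact ((measurable_id.pow_const i).mul (measurable_sqrtOvalPolyDeriv m)).aestronglyMeasurable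
  · exact Eventually.of_forall fun t ht m' hm' => norm_pow_mul_sqrtOvalPolyDeriv_le i
      (by linarith) (hnear m' hm').1 (sq_le_one_of_mem_uIoc ht)
  · filter_upwards [Measure.ae_ne volume (1 : ℝ)] with t ht1 ht m' hm'
    have ht2 : t ^ 2 < 1 := by
      rw [uIoc_of_le (by norm_num)] at ht
      nlinarith [ht.1, lt_of_le_of_ne ht.2 ht1]
    exact (hasDerivAt_sqrt_ovalPoly (hnear m' hm').2 ht2).const_mul (t ^ i)

lemma ovalIntegral_le_four (i : ℕ) {m : ℝ} (hm : m ≤ 3) : ovalIntegral i m ≤ 4 := by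
  calc ovalIntegral i m ≤ ‖ovalIntegral i m‖ := Real.le_norm_self _
    _ ≤ 2 * |1 - (-1)| := intervalIntegral.norm_integral_le_of_norm_le_const fun t ht => ?_
    _ = 4 := by norm_num
  have ht2 := sq_le_one_of_mem_uIoc ht
  have hq : ovalPoly m t ≤ 2 ^ 2 := by
    unfold ovalPoly
    nlinarith [mul_nonneg (sub_nonneg.2 ht2) (mul_nonneg (sub_nonneg.2 hm) (sq_nonneg t))]
  rw [norm_mul, norm_pow, Real.norm_eq_abs, Real.norm_of_nonneg (Real.sqrt_nonneg _)]
  calc |t| ^ i * √(ovalPoly m t) ≤ 1 * 2 :=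
        mul_le_mul (pow_le_one₀ (abs_nonneg t) ((sq_le_one_iff_abs_le_one t).1 ht2))
          (Real.sqrt_le_iff.2 ⟨by norm_num, hq⟩) (Real.sqrt_nonneg _) zero_le_one
    _ = 2 := one_mul 2

lemma ovalIntegral_nonneg {i : ℕ} (hi : Even i) (m : ℝ) : 0 ≤ ovalIntegral i m :=
  integral_nonneg (by norm_num) fun t _ => mul_nonneg (hi.pow_nonneg t) (Real.sqrt_nonneg _)

lemma one_div_sixtyFour_le_ovalIntegral_two {m : ℝ} (hm : 2 ≤ m) :
    1 / 64 ≤ ovalIntegral 2 m := by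
  have hsub : ∫ t in (1 / 2 : ℝ)..3 / 4, t ^ 2 * √(ovalPoly m t) ≤ ovalIntegral 2 m :=
    integral_mono_interval (by norm_num) (by norm_num) (by norm_num)
      (Eventually.of_forall fun t => mul_nonneg (sq_nonneg t) (Real.sqrt_nonneg _))
      ((by unfold ovalPoly; fun_prop : Continuous _).intervalIntegrable _ _)
  refine le_trans ?_ hsub
  calc (1 / 64 : ℝ) = ∫ _ in (1 / 2 : ℝ)..3 / 4, (1 / 16 : ℝ) := by norm_num
    _ ≤ _ := integral_mono_on (by norm_num) intervalIntegrable_const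
        ((by unfold ovalPoly; fun_prop : Continuous _).intervalIntegrable _ _) fun t ht => by
          obtain ⟨ht1, ht2⟩ := ht
          have hq : (1 / 4) ^ 2 ≤ ovalPoly m t := by
            have h1 : 7 / 16 ≤ 1 - t ^ 2 := by nlinarith
            have h2 : 1 / 4 ≤ m * (1 + t ^ 2) / 2 - 1 := by nlinarith
            unfold ovalPoly; nlinarith
          calc (1 / 16 : ℝ) = 1 / 4 * (1 / 4) := by norm_num
            _ ≤ t ^ 2 * √(ovalPoly m t) :=
              mul_le_mul (by nlinarith) (Real.le_sqrt_of_sq_le hq) (by norm_num) (sq_nonneg t)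

lemma ovalIntegralDeriv_two_le_one {m : ℝ} (hm : 2 ≤ m) : ovalIntegralDeriv 2 m ≤ 1 := by
  calc ovalIntegralDeriv 2 m ≤ ‖ovalIntegralDeriv 2 m‖ := Real.le_norm_self _
    _ ≤ 1 / 2 * |1 - (-1)| := intervalIntegral.norm_integral_le_of_norm_le_const fun t ht => ?_
    _ = 1 := by norm_num
  have ht2 := sq_le_one_of_mem_uIoc ht
  rw [norm_mul, Real.norm_of_nonneg (sqrtOvalPolyDeriv_nonneg m ht2), norm_pow, Real.norm_eq_abs]
  rcases eq_or_ne t 0 with rfl | ht0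
  · norm_num
  -- with `c = t²` the bound `1 / (2|t|)` on the derivative cancels against the factor `t²`
  have hbound := sqrtOvalPolyDeriv_le (m := m) (c := t ^ 2) (by positivity) ht2 (by nlinarith)
  rw [Real.sqrt_sq_eq_abs] at hbound
  have habs : 0 < |t| := abs_pos.2 ht0
  calc |t| ^ 2 * sqrtOvalPolyDeriv m t ≤ |t| ^ 2 * (1 / (2 * |t|)) := by gcongr
    _ = |t| / 2 := by field_simp
    _ ≤ 1 / 2 := by gcongr; exact (sq_le_one_iff_abs_le_one t).1 ht2

-- On `[√(m-2), 1/2]` the integrand is at least `1/(8t)`, which integrates to the logarithm.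
lemma neg_log_le_ovalIntegralDeriv_zero {m : ℝ} (hm : 2 < m) (hm' : m ≤ 9 / 4) :
    -log (4 * (m - 2)) / 16 ≤ ovalIntegralDeriv 0 m := by
  set a := √(m - 2)
  have ha_pos : 0 < a := Real.sqrt_pos.2 (by linarith)
  have ha_sq : a ^ 2 = m - 2 := Real.sq_sqrt (by linarith)
  have ha_half : a ≤ 1 / 2 := by nlinarith
  have hint := intervalIntegrable_pow_mul_sqrtOvalPolyDeriv 0 hm
  have hsub : ∫ t in a..1 / 2, t ^ 0 * sqrtOvalPolyDeriv m t ≤ ovalIntegralDeriv 0 m :=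
    integral_mono_interval (by linarith) ha_half (by norm_num)
      ((ae_restrict_mem measurableSet_Ioc).mono fun t ht =>
        mul_nonneg (by simp) (sqrtOvalPolyDeriv_nonneg m (by nlinarith [ht.1, ht.2])))
      hint
  have hpointwise : ∀ t ∈ Icc a (1 / 2), 1 / 8 * t⁻¹ ≤ t ^ 0 * sqrtOvalPolyDeriv m t := by
    rintro t ⟨hat, ht⟩
    have ht_pos : 0 < t := ha_pos.trans_le hat
    have ht_sq : t ^ 2 ≤ 1 / 4 := by nlinarith
    have hmt : m - 2 ≤ t ^ 2 := ha_sq ▸ pow_le_pow_left₀ ha_pos.le hat 2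
    have hK : 0 < m * (1 + t ^ 2) / 2 - 1 := by nlinarith
    have hq_pos : 0 < ovalPoly m t := mul_pos (by linarith) hK
    have hq : √(ovalPoly m t) ≤ 3 / 2 * t := by
      refine Real.sqrt_le_iff.2 ⟨by positivity, ?_⟩
      unfold ovalPoly; nlinarith [mul_nonneg (sq_nonneg t) hK.le]
    rw [pow_zero, one_mul, sqrtOvalPolyDeriv, le_div_iff₀ (by positivity)]
    calc 1 / 8 * t⁻¹ * (4 * √(ovalPoly m t))
        ≤ 1 / 8 * t⁻¹ * (4 * (3 / 2 * t)) := by gcongr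
      _ = 3 / 4 := by field_simp; norm_num
      _ ≤ (1 - t ^ 2) * (1 + t ^ 2) := by
          nlinarith [mul_le_mul ht_sq ht_sq (sq_nonneg t) (by norm_num)]
  have hlog : ∫ t in a..1 / 2, 1 / 8 * t⁻¹ = -log (4 * (m - 2)) / 16 := by
    rw [intervalIntegral.integral_const_mul, integral_inv_of_pos ha_pos (by norm_num)]
    have : 4 * (m - 2) = ((1 / 2) / a)⁻¹ ^ 2 := by rw [inv_pow, div_pow, ha_sq]; field_simp; ring
    rw [this, Real.log_pow, Real.log_inv]
    ring
  calc -log (4 * (m - 2)) / 16 = ∫ t in a..1 / 2, 1 / 8 * t⁻¹ := hlog.symm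
    _ ≤ ∫ t in a..1 / 2, t ^ 0 * sqrtOvalPolyDeriv m t :=
        integral_mono_on ha_half
          ((continuousOn_const.mul (continuousOn_inv₀.mono fun t ht => ?_)).intervalIntegrable)
          (hint.mono_set (uIcc_subset_uIcc (mem_uIcc_of_le (by linarith) (by linarith))
            (mem_uIcc_of_le (by norm_num) (by norm_num))))
          hpointwise
    _ ≤ ovalIntegralDeriv 0 m := hsub
  rw [uIcc_of_le ha_half] at ht
  exact (ha_pos.trans_le ht.1).ne'

lemma wronskian_ovalIntegral_pos {m : ℝ} (hm : 2 < m) (hm' : 4 * (m - 2) ≤ exp (-15000)) :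
    0 < ovalIntegralDeriv 0 m * (m * ovalIntegral 2 m)
      - ovalIntegral 0 m * (ovalIntegral 2 m + m * ovalIntegralDeriv 2 m) := by
  have hm94 : m ≤ 9 / 4 := by linarith [exp_le_one_iff.2 (by norm_num : (-15000 : ℝ) ≤ 0)]
  have hdA0 : 15000 / 16 ≤ ovalIntegralDeriv 0 m := by
    have := Real.log_le_log (by linarith) hm'
    rw [Real.log_exp] at this
    linarith [neg_log_le_ovalIntegralDeriv_zero hm hm94]
  have hA2 := one_div_sixtyFour_le_ovalIntegral_two hm.le
  have hA0 := ovalIntegral_nonneg Even.zero m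
  have hA0' := ovalIntegral_le_four 0 (m := m) (by linarith)
  have hX : ovalIntegral 2 m + m * ovalIntegralDeriv 2 m ≤ 25 / 4 := by
    nlinarith [ovalIntegral_le_four 2 (m := m) (by linarith), ovalIntegralDeriv_two_le_one hm.le]
  rw [sub_pos]
  calc ovalIntegral 0 m * (ovalIntegral 2 m + m * ovalIntegralDeriv 2 m) ≤ 4 * (25 / 4) := by
        nlinarith
    _ < 15000 / 16 * (2 * (1 / 64)) := by norm_num
    _ ≤ ovalIntegralDeriv 0 m * (m * ovalIntegral 2 m) := by gcongr

/-- At most one zero of the first Melnikov function bifurcates from the figure-eight. -/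
theorem first_melnikov_at_most_one_zero :
    ∃ δ : ℝ, 0 < δ ∧ ∀ l1 l4 : ℝ, (l1, l4) ≠ (0, 0) →
      {h : ℝ | h ∈ Ioo 0 δ ∧ l1 * ellI 0 h + l4 * ellI 2 h = 0}.Subsingleton := by
  refine ⟨exp (-15000) / 8, by positivity, fun l1 l4 hl => ?_⟩
  have hzeros := subsingleton_zeros_of_wronskian_pos (a := 2) (b := 2 + 2 * (exp (-15000) / 8))
    (f := ovalIntegral 0) (g := fun m => m * ovalIntegral 2 m)
    (fun m hm => hasDerivAt_ovalIntegral 0 hm.1)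
    (fun m hm => (hasDerivAt_id' m).mul (hasDerivAt_ovalIntegral 2 hm.1))
    (fun m hm => mul_pos (by linarith [hm.1])
      (by linarith [one_div_sixtyFour_le_ovalIntegral_two hm.1.le]))
    (fun m hm => by simpa using wronskian_ovalIntegral_pos hm.1 (by linarith [hm.2])) hl
  rintro x ⟨hx, hx0⟩ y ⟨hy, hy0⟩
  exact strictMonoOn_ovalParam.injOn (by linarith [hx.1] : -1 / 4 ≤ x)
    (by linarith [hy.1] : -1 / 4 ≤ y)
    (hzeros (ovalParam_mem_zeros hx hx0) (ovalParam_mem_zeros hy hy0))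
end

section
/- (The exterior level sets are ovals.) For every h > 0, the level set {(x, y) ∈ ℝ² : H(x, y) = h} = {(x, y) : y²/2 − x²/2 + x⁴/4 = h} is nonempty, compact and connected. -/
/-- For every `h > 0` the exterior level set `{H = h}` of the Duffing Hamiltonian
`H(x,y) = y²/2 - x²/2 + x⁴/4` is a nonempty, compact, connected oval. -/
theorem exterior_level_set_is_oval (h : ℝ) (hh : 0 < h) :
    let S : Set (ℝ × ℝ) := {p | p.2^2/2 - p.1^2/2 + p.1^4/4 = h}
    S.Nonempty ∧ IsCompact S ∧ IsConnected S := by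
  intro S
  -- g x = 2h + x² - x⁴/2 ; S = {(x,y) : y² = g x}
  set g : ℝ → ℝ := fun x => 2*h + x^2 - x^4/2 with hg
  have hmem : ∀ p : ℝ × ℝ, p ∈ S ↔ p.2^2 = g p.1 := by
    intro p
    constructor <;> intro hp <;> simp only [S, Set.mem_setOf_eq, hg] at * <;> linarith
  -- s = √(1+4h), a = √(1+s)
  set s : ℝ := Real.sqrt (1 + 4*h) with hs
  have hs2 : s^2 = 1 + 4*h := Real.sq_sqrt (by linarith)
  have hs1 : 1 < s := by nlinarith [Real.sqrt_nonneg (1 + 4*h)]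
  set a : ℝ := Real.sqrt (1 + s) with ha
  have ha2 : a^2 = 1 + s := Real.sq_sqrt (by linarith)
  have hapos : 0 < a := Real.sqrt_pos.mpr (by linarith)
  have key : ∀ x : ℝ, g x = (a^2 - x^2) * (x^2 + (s - 1)) / 2 := by
    intro x
    simp only [hg]
    nlinarith [hs2, ha2]
  have hfac : ∀ x : ℝ, 0 < x^2 + (s - 1) := by
    intro x; nlinarith [sq_nonneg x]
  -- f x = √(g x)
  set f : ℝ → ℝ := fun x => Real.sqrt (g x) with hf
  have hfc : Continuous f := by
    apply Real.continuous_sqrt.comp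
    simp only [hg]; continuity
  have hga : g a = 0 := by rw [key]; ring
  have hfa : f a = 0 := by rw [hf]; simp [hga]
  have hgpos : ∀ x ∈ Set.Icc (-a) a, 0 ≤ g x := by
    intro x hx
    rw [key]
    have : x^2 ≤ a^2 := sq_le_sq' hx.1 hx.2
    nlinarith [hfac x]
  -- S = graph of f ∪ graph of -f over [-a,a]
  have hSeq : S = (fun x => (x, f x)) '' Set.Icc (-a) a ∪
      (fun x => (x, -f x)) '' Set.Icc (-a) a := by
    ext p
    rw [hmem]
    constructor
    · intro hp
      have hxI : p.1 ∈ Set.Icc (-a) a := by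
        have h1 : p.1^2 ≤ a^2 := by
          by_contra hc
          push_neg at hc
          have h2 : p.2^2 = (a^2 - p.1^2) * (p.1^2 + (s - 1)) / 2 := hp.trans (key p.1)
          have h3 := mul_pos (sub_pos.mpr hc) (hfac p.1)
          nlinarith [sq_nonneg p.2]
        exact abs_le_of_sq_le_sq' h1 hapos.le
      have habs : f p.1 = |p.2| := by
        rw [hf]; simp only [← hp]
        exact Real.sqrt_sq_eq_abs p.2
      rcases abs_cases p.2 with ⟨he, _⟩ | ⟨he, _⟩
      · left
        refine ⟨p.1, hxI, ?_⟩
        show (p.1, f p.1) = p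
        rw [habs, he]
      · right
        refine ⟨p.1, hxI, ?_⟩
        show (p.1, -f p.1) = p
        rw [habs, he, neg_neg]
    · rintro (⟨x, hx, rfl⟩ | ⟨x, hx, rfl⟩)
      · show (Real.sqrt (g x))^2 = g x
        exact Real.sq_sqrt (hgpos x hx)
      · show (-Real.sqrt (g x))^2 = g x
        rw [neg_sq]
        exact Real.sq_sqrt (hgpos x hx)
  have hIcc : IsConnected (Set.Icc (-a) a) :=
    ⟨⟨a, by constructor <;> linarith⟩, isPreconnected_Icc⟩
  have hC1 : IsConnected ((fun x => (x, f x)) '' Set.Icc (-a) a) :=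
    hIcc.image _ (continuous_id.prodMk hfc).continuousOn
  have hC2 : IsConnected ((fun x => (x, -f x)) '' Set.Icc (-a) a) :=
    hIcc.image _ (continuous_id.prodMk hfc.neg).continuousOn
  have hK1 : IsCompact ((fun x => (x, f x)) '' Set.Icc (-a) a) :=
    isCompact_Icc.image (continuous_id.prodMk hfc)
  have hK2 : IsCompact ((fun x => (x, -f x)) '' Set.Icc (-a) a) :=
    isCompact_Icc.image (continuous_id.prodMk hfc.neg)
  have hint : (((fun x => (x, f x)) '' Set.Icc (-a) a) ∩
      ((fun x => (x, -f x)) '' Set.Icc (-a) a)).Nonempty := by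
    refine ⟨(a, 0), ⟨a, ⟨by linarith, le_refl a⟩, ?_⟩,
      ⟨a, ⟨by linarith, le_refl a⟩, ?_⟩⟩
    · show (a, f a) = (a, 0)
      rw [hfa]
    · show (a, -f a) = (a, 0)
      rw [hfa, neg_zero]
  refine ⟨?_, ?_, ?_⟩
  · refine ⟨(0, Real.sqrt (2*h)), ?_⟩
    simp only [S, Set.mem_setOf_eq]
    rw [Real.sq_sqrt (by linarith)]
    ring
  · rw [hSeq]; exact hK1.union hK2
  · rw [hSeq]; exact IsConnected.union hint hC1 hC2
end
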